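/- Let σ be a type of variables, let N ≥ 1, let Q be a real symmetric N×N diagonally dominant matrix, and let z₁, …, z_N be polynomials in ℝ[σ] (multivariate polynomials over ℝ). Then the polynomial Σ_{α,β} Q_{αβ} · z_α · z_β is a sum of squares of polynomials. (In particular, every dsos polynomial is a sum of squares, giving the inclusion DSOS_{n,d} ⊆ SOS_{n,d}.) -/

import Mathlib

/-!
Gershgorin's theorem places every eigenvalue of a diagonally dominant matrix `Q` in a disc
centred at some `Q k k` of radius `∑_{j ≠ k} |Q k j| ≤ Q k k`, so a symmetric such `Q` is
positive semidefinite and factors as `Q = Bᵀ B`.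
Then `∑_{α,β} Q α β z_α z_β = ∑_k (∑_α B k α z_α)²`.
-/

/-- A real symmetric `N×N` matrix is diagonally dominant if
`Q i i ≥ ∑_{j ≠ i} |Q i j|` for every `i`. -/
def IsDiagDom {N : ℕ} (Q : Matrix (Fin N) (Fin N) ℝ) : Prop :=
  ∀ i, ∑ j ∈ Finset.univ.filter (fun j => j ≠ i), |Q i j| ≤ Q i i

open Finset Matrix

theorem IsDiagDom.posSemidef {N : ℕ} {Q : Matrix (Fin N) (Fin N) ℝ} (hdd : IsDiagDom Q)
    (hsymm : Q.IsSymm) : Q.PosSemidef := by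
  have hQ : Q.IsHermitian := by rwa [IsHermitian, conjTranspose_eq_transpose_of_trivial]
  refine hQ.posSemidef_iff_eigenvalues_nonneg.mpr fun i => ?_
  have hμ : Module.End.HasEigenvalue (toLin' Q) (hQ.eigenvalues i) :=
    .of_mem_spectrum ((spectrum_toLin' Q).symm ▸ hQ.eigenvalues_mem_spectrum_real i)
  obtain ⟨k, hk⟩ := eigenvalue_mem_ball hμ
  have hrow := hdd k
  rw [filter_ne' univ k] at hrow
  simp only [Real.norm_eq_abs, Metric.mem_closedBall, Real.dist_eq] at hk
  simp only [Pi.zero_apply]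
  linarith [neg_abs_le (hQ.eigenvalues i - Q k k)]

theorem sum_sum_map_transpose_mul_self {ι κ S R : Type*} [Fintype ι] [Fintype κ]
    [CommSemiring S] [CommSemiring R] (f : S →+* R) (B : Matrix ι κ S) (z : κ → R) :
    ∑ α, ∑ β, f ((Bᵀ * B) α β) * z α * z β =
      ∑ k, (∑ α, f (B k α) * z α) * (∑ α, f (B k α) * z α) := by
  simp_rw [sum_mul_sum, mul_apply, transpose_apply, map_sum, map_mul, sum_mul]
  conv_rhs => rw [Finset.sum_comm]; enter [2, α]; rw [Finset.sum_comm]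
  exact sum_congr rfl fun α _ => sum_congr rfl fun β _ => sum_congr rfl fun k _ => by ring

theorem Matrix.PosSemidef.isSumSq_sum_sum_map_mul_mul {n R : Type*} [Fintype n] [CommSemiring R]
    {Q : Matrix n n ℝ} (hQ : Q.PosSemidef) (f : ℝ →+* R) (z : n → R) :
    IsSumSq (∑ α, ∑ β, f (Q α β) * z α * z β) := by
  classical
  open scoped MatrixOrder in
  obtain ⟨B, rfl⟩ := CStarAlgebra.nonneg_iff_eq_star_mul_self.mp hQ.nonneg
  rw [star_eq_conjTranspose, conjTranspose_eq_transpose_of_trivial,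
    sum_sum_map_transpose_mul_self]
  exact IsSumSq.sum_mul_self _ _

theorem dd_gram_sum_isSumSq_general {σ : Type*} {N : ℕ}
    (Q : Matrix (Fin N) (Fin N) ℝ) (hQSymm : Q.IsSymm) (hQdd : IsDiagDom Q)
    (z : Fin N → MvPolynomial σ ℝ) :
    IsSumSq (∑ α, ∑ β, MvPolynomial.C (Q α β) * z α * z β) :=
  (hQdd.posSemidef hQSymm).isSumSq_sum_sum_map_mul_mul MvPolynomial.C z

/-- If `Q` is a real symmetric diagonally dominant `N×N` matrix and `z₁, …, z_N` are
multivariate real polynomials, then `∑_{α,β} Q_{αβ} z_α z_β` is a sum of squares of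
polynomials. In particular every dsos polynomial is sos, i.e.
`DSOS_{n,d} ⊆ SOS_{n,d}`. -/
theorem dd_gram_sum_isSumSq {σ : Type*} {N : ℕ} (hN : 1 ≤ N)
    (Q : Matrix (Fin N) (Fin N) ℝ) (hQSymm : Q.IsSymm) (hQdd : IsDiagDom Q)
    (z : Fin N → MvPolynomial σ ℝ) :
    IsSumSq (∑ α, ∑ β, MvPolynomial.C (Q α β) * z α * z β) :=
  dd_gram_sum_isSumSq_general Q hQSymm hQdd z
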